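/- arXiv:2110.07346 — 3 statements merged into one kernel-verified Lean document; each statement's English description precedes it below -/
import Mathlib

section
/- Positional determinacy of positive-energy games: for every game G = (V, E, w, V_Min, V_Max) with weights in ℤ ∪ {∞}, there exist a strategy σ₀ for Min and a strategy τ₀ for Max such that for every vertex v ∈ V, sup over infinite paths π from v consistent with σ₀ of En⁺(w(π)) = inf over Min strategies σ of sup over infinite paths π from v consistent with σ of En⁺(w(π)) = sup over Max strategies τ of inf over infinite paths π from v consistent with τ of En⁺(w(π)) = inf over infinite paths π from v consistent with τ₀ of En⁺(w(π)). -/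
attribute [local instance] Classical.propDecidable

/-- A game: a directed graph `E` on vertex set `V` with no sink, edge weights `wt : V → V → R`,
and a partition of the vertices into those belonging to Min (`isMin`) and to Max (the rest). -/
structure Game (V : Type) (R : Type) where
  E : V → V → Prop
  wt : V → V → R
  isMin : V → Prop
  nosink : ∀ v, ∃ u, E v u

namespace Game

variable {V : Type} {R : Type}

/-- A strategy for Min: a choice of an outgoing edge at every Min vertex. -/
def MinStrat (G : Game V R) : Type := {σ : V → V // ∀ v, G.isMin v → G.E v (σ v)}

/-- A strategy for Max: a choice of an outgoing edge at every Max vertex. -/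
def MaxStrat (G : Game V R) : Type := {τ : V → V // ∀ v, ¬ G.isMin v → G.E v (τ v)}

/-- An infinite path in the graph. -/
def IsPath (G : Game V R) (π : ℕ → V) : Prop := ∀ i, G.E (π i) (π (i + 1))

/-- Consistency of an infinite path with a Min strategy. -/
def ConsMin (G : Game V R) (σ : G.MinStrat) (π : ℕ → V) : Prop :=
  ∀ i, G.isMin (π i) → π (i + 1) = σ.1 (π i)

/-- Consistency of an infinite path with a Max strategy. -/
def ConsMax (G : Game V R) (τ : G.MaxStrat) (π : ℕ → V) : Prop :=
  ∀ i, ¬ G.isMin (π i) → π (i + 1) = τ.1 (π i)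

/-- Infinite paths starting in `v` consistent with the Min strategy `σ`. -/
def PlaysMin (G : Game V R) (σ : G.MinStrat) (v : V) : Type :=
  {π : ℕ → V // π 0 = v ∧ G.IsPath π ∧ G.ConsMin σ π}

/-- Infinite paths starting in `v` consistent with the Max strategy `τ`. -/
def PlaysMax (G : Game V R) (τ : G.MaxStrat) (v : V) : Type :=
  {π : ℕ → V // π 0 = v ∧ G.IsPath π ∧ G.ConsMax τ π}

/-- The sequence of weights along an infinite path. -/
def wseq (G : Game V R) (π : ℕ → V) : ℕ → R := fun i => G.wt (π i) (π (i + 1))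

/-- Embedding of `ℤ ∪ {∞}` into the extended reals. -/
noncomputable def toE (x : WithTop ℤ) : EReal :=
  if h : x = ⊤ then ⊤ else (((x.untop h : ℤ) : ℝ) : EReal)

/-- Embedding of `ℕ ∪ {∞}` into the extended reals. -/
noncomputable def enatToE (x : ENat) : EReal :=
  if x = ⊤ then ⊤ else ((x.toNat : ℝ) : EReal)

/-- Conversion `ℤ ∪ {∞} → ℕ ∪ {∞}` (exact on non-negative values). -/
noncomputable def wToN (x : WithTop ℤ) : ENat :=
  if h : x = ⊤ then ⊤ else ((x.untop h).toNat : ENat)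

/-- The mean-payoff valuation `MP(w₀w₁⋯) = limsup_k (1/k) ∑_{i<k} w_i`. -/
noncomputable def MPv (w : ℕ → ℤ) : EReal :=
  Filter.limsup
    (fun k : ℕ => ((((∑ i ∈ Finset.range k, w i : ℤ) : ℝ) / (k : ℝ) : ℝ) : EReal))
    Filter.atTop

/-- The energy valuation `En(w₀w₁⋯) = sup_k ∑_{i<k} w_i` (weights given in `EReal`). -/
noncomputable def En (w : ℕ → EReal) : EReal :=
  ⨆ k : ℕ, ∑ i ∈ Finset.range k, w i

/-- The positive-energy valuation `En⁺(w₀w₁⋯) = ∑_{i<k¬} w_i ∈ ℕ ∪ {∞}` where `k¬` is the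
first index of a negative weight (the whole, possibly infinite, sum if no weight is negative). -/
noncomputable def EnP (w : ℕ → WithTop ℤ) : ENat :=
  if h : ∃ k, w k < 0 then ∑ i ∈ Finset.range (Nat.find h), wToN (w i)
  else ⨆ k : ℕ, ∑ i ∈ Finset.range k, wToN (w i)

/-- The mean-payoff value of a vertex:
`MP_G(v) = inf over Min strategies σ of sup over plays π from v consistent with σ of MP(w(π))`. -/
noncomputable def MPVal (G : Game V ℤ) (v : V) : EReal :=
  ⨅ σ : G.MinStrat, ⨆ π : G.PlaysMin σ v, MPv (G.wseq π.1)

/-- The energy value of a vertex. -/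
noncomputable def EnVal (G : Game V (WithTop ℤ)) (v : V) : EReal :=
  ⨅ σ : G.MinStrat, ⨆ π : G.PlaysMin σ v, En (fun i => toE (G.wseq π.1 i))

/-- The positive-energy value of a vertex. -/
noncomputable def EnPVal (G : Game V (WithTop ℤ)) (v : V) : ENat :=
  ⨅ σ : G.MinStrat, ⨆ π : G.PlaysMin σ v, EnP (G.wseq π.1)

/-- Lift a game with integer weights to a game with weights in `ℤ ∪ {∞}`. -/
def liftZ (G : Game V ℤ) : Game V (WithTop ℤ) :=
  { E := G.E, wt := fun u v => (G.wt u v : WithTop ℤ), isMin := G.isMin, nosink := G.nosink }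

/-- The `φ`-modified weight: `w_φ(v,v') = w(v,v') + φ(v') − φ(v)` when `w(v,v')`, `φ(v)`, `φ(v')`
are all finite, and `∞` otherwise. -/
noncomputable def modWt (w : V → V → WithTop ℤ) (φ : V → ENat) (u v : V) : WithTop ℤ :=
  if w u v = ⊤ ∨ φ u = ⊤ ∨ φ v = ⊤ then ⊤
  else (((w u v).untopD 0 + ((φ v).toNat : ℤ) - ((φ u).toNat : ℤ) : ℤ) : WithTop ℤ)

/-- The `φ`-modified game `G_φ`. -/
noncomputable def modify (G : Game V (WithTop ℤ)) (φ : V → ENat) : Game V (WithTop ℤ) :=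
  { G with wt := modWt G.wt φ }

/-- `π 0 → π 1 → ⋯ → π k` is a simple cycle: `k ≥ 1`, consecutive edges, `π k = π 0`,
and `π 0, …, π (k-1)` pairwise distinct. -/
def IsSimpleCycle (G : Game V R) (π : ℕ → V) (k : ℕ) : Prop :=
  1 ≤ k ∧ (∀ i < k, G.E (π i) (π (i + 1))) ∧ π k = π 0 ∧
    ∀ i < k, ∀ j < k, π i = π j → i = j

/-- A game is simple if every simple cycle has nonzero sum of weights. -/
def IsSimpleR [AddCommMonoid R] (G : Game V R) : Prop :=
  ∀ π k, IsSimpleCycle G π k → (∑ i ∈ Finset.range k, G.wt (π i) (π (i + 1))) ≠ 0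

/-- `W = max_{e ∈ E} |w(e)|`. -/
noncomputable def maxW (G : Game V ℤ) [Fintype V] : ℕ :=
  Finset.sup Finset.univ (fun p : V × V => if G.E p.1 p.2 then (G.wt p.1 p.2).natAbs else 0)

/-- The ESL iteration: `G₀ = G` and `G_{j+1} = (G_j)_{φ_j}` where `φ_j = En⁺_{G_j}`. -/
noncomputable def esl (G : Game V (WithTop ℤ)) : ℕ → Game V (WithTop ℤ)
  | 0 => G
  | j + 1 => modify (esl G j) (EnPVal (esl G j))

/-- The accumulated ESL potential `Φ_j = φ₀ + ⋯ + φ_{j−1}`. -/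
noncomputable def eslPhi (G : Game V (WithTop ℤ)) (j : ℕ) (v : V) : ENat :=
  ∑ i ∈ Finset.range j, EnPVal (esl G i) v

/-- The set of vertices from which Min can ensure to immediately visit a negative-weight edge:
Min vertices with some negative outgoing edge, and Max vertices all of whose outgoing edges
are negative. -/
def NegSet (G : Game V (WithTop ℤ)) : Set V :=
  {v | (G.isMin v ∧ ∃ u, G.E v u ∧ G.wt v u < 0) ∨
       (¬ G.isMin v ∧ ∀ u, G.E v u → G.wt v u < 0)}

end Game

open Game

/-!
Value iteration from `0` with the one-step operator `valueOp` (Min minimises, Max maximises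
`step (w v u) (x u)` over the edges `v → u`) converges on a finite graph to the least fixed
point `value`. Min picks an edge realising the minimum; along his plays `value` is a potential
that dominates the energy collected. At a vertex of finite value, Max picks an edge that is
optimal in the game truncated after `rank v` moves, the first iteration reaching `value v`:
then `rank` strictly decreases along zero-weight edges that keep the value constant, so Max
cannot be trapped in a cycle collecting nothing. At a vertex of infinite value, Max plays an
attractor strategy forcing positive edges infinitely often; every such vertex is in the
attractor, since otherwise lowering `value` to a large finite constant outside it would give a
smaller prefixed point. Both guarantees meet at `value`, and weak duality closes the chain.
-/

lemma Monotone.exists_forall_ge_eq_of_finite_range {α : Type*} [PartialOrder α] {f : ℕ → α}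
    (hf : Monotone f) (hfin : (Set.range f).Finite) : ∃ N, ∀ n ≥ N, f n = f N := by
  obtain ⟨_, ⟨N, rfl⟩, hmax⟩ := hfin.exists_maximalFor id _ ⟨f 0, 0, rfl⟩
  exact ⟨N, fun n hn => le_antisymm (hmax ⟨n, rfl⟩ (hf hn)) (hf hn)⟩

namespace Game

section Energy

variable {w : WithTop ℤ} {x y : ℕ∞}

lemma wToN_coe (a : ℤ) : wToN a = a.toNat := by
  simp [wToN]

lemma wToN_eq_top_iff : wToN w = ⊤ ↔ w = ⊤ := by
  induction w using WithTop.recTopCoe <;> simp [wToN]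

lemma wToN_zero : wToN 0 = 0 := by
  simpa using wToN_coe 0

lemma one_le_wToN (hw : 0 < w) : 1 ≤ wToN w := by
  induction w using WithTop.recTopCoe with
  | top => simp [wToN]
  | coe a =>
    have : 0 < a := by exact_mod_cast hw
    rw [wToN_coe]
    exact_mod_cast (by omega : 1 ≤ a.toNat)

noncomputable def step (w : WithTop ℤ) (x : ℕ∞) : ℕ∞ := if w < 0 then 0 else wToN w + x

lemma step_of_neg (hw : w < 0) (x : ℕ∞) : step w x = 0 := if_pos hw

lemma step_of_nonneg (hw : 0 ≤ w) (x : ℕ∞) : step w x = wToN w + x := if_neg hw.not_gt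

lemma step_zero (x : ℕ∞) : step 0 x = x := by
  rw [step_of_nonneg le_rfl, wToN_zero, zero_add]

lemma step_mono (w : WithTop ℤ) : Monotone (step w) := fun x y hxy => by
  unfold step
  split_ifs
  · exact le_rfl
  · gcongr

lemma step_iSup (w : WithTop ℤ) (f : ℕ → ℕ∞) : step w (⨆ n, f n) = ⨆ n, step w (f n) := by
  unfold step
  split_ifs
  · simp
  · exact ENat.add_iSup f

lemma step_eq_top_iff : step w x = ⊤ ↔ 0 ≤ w ∧ (w = ⊤ ∨ x = ⊤) := by
  rcases lt_or_ge w 0 with hw | hw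
  · simp [step_of_neg hw, hw.not_ge]
  · simp [step_of_nonneg hw, hw, wToN_eq_top_iff]

lemma nonneg_of_step_ne_zero (h : step w x ≠ 0) : 0 ≤ w :=
  not_lt.1 fun hw => h (step_of_neg hw x)

lemma eq_of_step_eq (h : step w x = step w y) (h0 : step w x ≠ 0) (htop : step w x ≠ ⊤) :
    x = y := by
  have hw := nonneg_of_step_ne_zero h0
  rw [step_of_nonneg hw, step_of_nonneg hw] at h
  rw [step_of_nonneg hw] at htop
  exact WithTop.add_left_cancel (WithTop.add_ne_top.1 htop).1 h

end Energy

section EnP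

variable (w : ℕ → WithTop ℤ)

lemma EnP_eq_iSup :
    EnP w = ⨆ k, ⨆ _ : ∀ i < k, 0 ≤ w i, ∑ i ∈ Finset.range k, wToN (w i) := by
  rw [EnP]
  split_ifs with h
  · refine le_antisymm
      (le_iSup₂_of_le (Nat.find h) (fun i hi => not_lt.1 (Nat.find_min h hi)) le_rfl)
      (iSup₂_le fun k hk => Finset.sum_le_sum_of_subset (Finset.range_subset_range.2 ?_))
    by_contra hlt
    exact (hk _ (not_le.1 hlt)).not_gt (Nat.find_spec h)
  · push Not at h
    exact iSup_congr fun k => by rw [iSup_pos fun i (_ : i < k) => h i]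

variable {w}

lemma sum_le_EnP {k : ℕ} (h : ∀ i < k, 0 ≤ w i) :
    ∑ i ∈ Finset.range k, wToN (w i) ≤ EnP w :=
  (EnP_eq_iSup w).symm ▸ le_iSup₂_of_le k h le_rfl

lemma add_EnP_shift_le {k : ℕ} (h : ∀ i < k, 0 ≤ w i) :
    ∑ i ∈ Finset.range k, wToN (w i) + EnP (fun j => w (k + j)) ≤ EnP w := by
  rw [EnP_eq_iSup (fun j => w (k + j)), ENat.add_biSup' ⟨0, by simp⟩]
  refine iSup₂_le fun j hj => ?_
  rw [← Finset.sum_range_add]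
  refine sum_le_EnP fun i hi => ?_
  rcases lt_or_ge i k with hik | hik
  · exact h i hik
  · simpa [Nat.add_sub_cancel' hik] using hj (i - k) (by omega)

lemma sum_add_le_of_step_le (p : ℕ → ℕ∞) (hp : ∀ i, 0 ≤ w i → wToN (w i) + p (i + 1) ≤ p i)
    (k : ℕ) (hk : ∀ i < k, 0 ≤ w i) : ∑ i ∈ Finset.range k, wToN (w i) + p k ≤ p 0 := by
  induction k with
  | zero => simp
  | succ k ih =>
    calc ∑ i ∈ Finset.range (k + 1), wToN (w i) + p (k + 1)
        = ∑ i ∈ Finset.range k, wToN (w i) + (wToN (w k) + p (k + 1)) := by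
          rw [Finset.sum_range_succ, add_assoc]
      _ ≤ ∑ i ∈ Finset.range k, wToN (w i) + p k := by
          gcongr
          exact hp k (hk k k.lt_succ_self)
      _ ≤ p 0 := ih fun i hi => hk i (by omega)

lemma EnP_le_of_potential (p : ℕ → ℕ∞) (hp : ∀ i, 0 ≤ w i → wToN (w i) + p (i + 1) ≤ p i) :
    EnP w ≤ p 0 := by
  rw [EnP_eq_iSup]
  exact iSup₂_le fun k hk => le_self_add.trans (sum_add_le_of_step_le p hp k hk)

lemma EnP_eq_top_of_frequently_ne_zero (hw : ∀ i, 0 ≤ w i) (h : ∀ N, ∃ i ≥ N, w i ≠ 0) :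
    EnP w = ⊤ := by
  have grow : ∀ m : ℕ, ∃ k, (m : ℕ∞) ≤ ∑ i ∈ Finset.range k, wToN (w i) := by
    intro m
    induction m with
    | zero => exact ⟨0, by simp⟩
    | succ m ih =>
      obtain ⟨k, hk⟩ := ih
      obtain ⟨i, hik, hi⟩ := h k
      refine ⟨i + 1, ?_⟩
      calc ((m + 1 : ℕ) : ℕ∞) = m + 1 := by push_cast; rfl
        _ ≤ ∑ j ∈ Finset.range i, wToN (w j) + wToN (w i) := by
          gcongr
          · exact hk.trans (Finset.sum_le_sum_of_subset (Finset.range_subset_range.2 hik))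
          · exact one_le_wToN (lt_of_le_of_ne (hw i) (Ne.symm hi))
        _ = ∑ j ∈ Finset.range (i + 1), wToN (w j) := (Finset.sum_range_succ _ i).symm
  refine ENat.eq_top_iff_forall_ge.2 fun m => ?_
  obtain ⟨k, hk⟩ := grow m
  exact hk.trans (sum_le_EnP fun i _ => hw i)

lemma le_sum_add_of_le_step (p : ℕ → ℕ∞) (hp : ∀ i, p i ≤ step (w i) (p (i + 1))) (k : ℕ)
    (hk : ∀ i < k, 0 ≤ w i) : p 0 ≤ ∑ i ∈ Finset.range k, wToN (w i) + p k := by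
  induction k with
  | zero => simp
  | succ k ih =>
    calc p 0 ≤ ∑ i ∈ Finset.range k, wToN (w i) + p k := ih fun i hi => hk i (by omega)
      _ ≤ ∑ i ∈ Finset.range k, wToN (w i) + (wToN (w k) + p (k + 1)) := by
        gcongr
        exact (hp k).trans_eq (step_of_nonneg (hk k k.lt_succ_self) _)
      _ = ∑ i ∈ Finset.range (k + 1), wToN (w i) + p (k + 1) := by
        rw [Finset.sum_range_succ, add_assoc]

lemma le_EnP_of_le_step_of_eq_zero (p : ℕ → ℕ∞) (hp : ∀ i, p i ≤ step (w i) (p (i + 1)))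
    {k : ℕ} (hk : ∀ i < k, 0 ≤ w i) (h0 : p k = 0) : p 0 ≤ EnP w := by
  have := le_sum_add_of_le_step p hp k hk
  rw [h0, add_zero] at this
  exact this.trans (sum_le_EnP hk)

lemma exists_forall_ge_eq_zero_and_eq (p : ℕ → ℕ∞) (hp : ∀ i, p i ≤ step (w i) (p (i + 1)))
    (hfin : (Set.range p).Finite) (hw : ∀ i, 0 ≤ w i) (hE : EnP w ≠ ⊤) :
    ∃ N, ∀ i ≥ N, w i = 0 ∧ p i = p N := by
  obtain ⟨N, hN⟩ : ∃ N, ∀ i ≥ N, w i = 0 := by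
    by_contra h
    push Not at h
    exact hE (EnP_eq_top_of_frequently_ne_zero hw h)
  have hmono : Monotone fun j => p (N + j) := monotone_nat_of_le_succ fun j => by
    have := hp (N + j)
    rwa [hN (N + j) (by omega), step_zero] at this
  obtain ⟨M, hM⟩ := hmono.exists_forall_ge_eq_of_finite_range
    (hfin.subset (Set.range_comp_subset_range _ p))
  refine ⟨N + M, fun i hi => ⟨hN i (by omega), ?_⟩⟩
  simpa [show N + (i - N) = i by omega] using hM (i - N) (by omega)

lemma le_EnP_of_potential (p : ℕ → ℕ∞) (r : ℕ → ℕ) (hp : ∀ i, p i ≤ step (w i) (p (i + 1)))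
    (htop : ∀ i, p i = ⊤ → EnP (fun j => w (i + j)) = ⊤) (hfin : (Set.range p).Finite)
    (hr : ∀ i, w i = 0 → p (i + 1) = p i → p i ≠ 0 → p i ≠ ⊤ → r (i + 1) < r i) :
    p 0 ≤ EnP w := by
  by_cases hneg : ∃ k, w k < 0
  · exact le_EnP_of_le_step_of_eq_zero p hp (fun i hi => not_lt.1 (Nat.find_min hneg hi))
      (nonpos_iff_eq_zero.1 ((hp _).trans_eq (step_of_neg (Nat.find_spec hneg) _)))
  push Not at hneg
  by_cases hT : ∃ k, p k = ⊤
  · obtain ⟨k, hk⟩ := hT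
    have := add_EnP_shift_le (w := w) (k := k) fun i _ => hneg i
    rw [htop k hk, add_top, top_le_iff] at this
    exact this ▸ le_top
  push Not at hT
  by_cases hE : EnP w = ⊤
  · exact hE ▸ le_top
  obtain ⟨N, hN⟩ := exists_forall_ge_eq_zero_and_eq p hp hfin hneg hE
  by_cases h0 : p N = 0
  · exact le_EnP_of_le_step_of_eq_zero p hp (fun i _ => hneg i) h0
  have hdesc : StrictAnti fun j => r (N + j) := strictAnti_nat_of_succ_lt fun j => by
    have hj := (hN (N + j) (by omega)).2
    exact hr (N + j) (hN _ (by omega)).1 ((hN _ (by omega)).2.trans hj.symm) (hj ▸ h0) (hj ▸ hT _)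
  exact absurd hdesc (not_strictAnti_of_wellFoundedLT _)

end EnP

section ValueIteration

variable {V : Type} (G : Game V (WithTop ℤ))

instance (v : V) : Nonempty {u // G.E v u} :=
  let ⟨u, hu⟩ := G.nosink v
  ⟨⟨u, hu⟩⟩

noncomputable def valueOp (x : V → ℕ∞) (v : V) : ℕ∞ :=
  if G.isMin v then ⨅ u : {u // G.E v u}, step (G.wt v u) (x u)
  else ⨆ u : {u // G.E v u}, step (G.wt v u) (x u)

/-- `valueIter n v` is the value of the game stopped after `n` moves. -/
noncomputable def valueIter : ℕ → V → ℕ∞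
  | 0 => 0
  | n + 1 => G.valueOp (valueIter n)

noncomputable def value (v : V) : ℕ∞ := ⨆ n, G.valueIter n v

variable {G}

lemma valueOp_mono : Monotone G.valueOp := fun x y hxy v => by
  unfold valueOp
  split_ifs
  · exact iInf_mono fun u => step_mono _ (hxy u)
  · exact iSup_mono fun u => step_mono _ (hxy u)

lemma valueOp_le_step {v u : V} (hm : G.isMin v) (hu : G.E v u) (x : V → ℕ∞) :
    G.valueOp x v ≤ step (G.wt v u) (x u) := by
  rw [valueOp, if_pos hm]
  exact iInf_le (fun u : {u // G.E v u} => step (G.wt v u) (x u)) ⟨u, hu⟩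

lemma step_le_valueOp {v u : V} (hm : ¬ G.isMin v) (hu : G.E v u) (x : V → ℕ∞) :
    step (G.wt v u) (x u) ≤ G.valueOp x v := by
  rw [valueOp, if_neg hm]
  exact le_iSup (fun u : {u // G.E v u} => step (G.wt v u) (x u)) ⟨u, hu⟩

lemma valueIter_mono : Monotone G.valueIter := by
  refine monotone_nat_of_le_succ fun n => ?_
  induction n with
  | zero => exact fun v => zero_le
  | succ n ih => exact valueOp_mono ih

lemma valueIter_le_value (n : ℕ) (v : V) : G.valueIter n v ≤ G.value v :=
  le_iSup (fun n => G.valueIter n v) n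

lemma valueOp_value [Finite V] : G.valueOp G.value = G.value := by
  funext v
  have hshift : G.value v = ⨆ n, G.valueOp (G.valueIter n) v :=
    le_antisymm
      (iSup_le fun n => (valueIter_mono n.le_succ v).trans
        (le_iSup (fun n => G.valueOp (G.valueIter n) v) n))
      (iSup_le fun n => valueIter_le_value (n + 1) v)
  have hstep : ∀ u : {u // G.E v u},
      step (G.wt v u) (G.value u) = ⨆ n, step (G.wt v u) (G.valueIter n u) :=
    fun u => step_iSup _ _
  rw [hshift]
  unfold valueOp
  split_ifs
  · simp_rw [hstep]
    exact (iSup_iInf_of_monotone (f := fun (u : {u // G.E v u}) n =>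
      step (G.wt v u) (G.valueIter n u)) fun u _ _ hmn => step_mono _ (valueIter_mono hmn u.1)).symm
  · simp_rw [hstep]
    exact iSup_comm

lemma value_le_of_valueOp_le (x : V → ℕ∞) (hx : ∀ v, G.valueOp x v ≤ x v) (v : V) :
    G.value v ≤ x v := by
  have h : ∀ n v, G.valueIter n v ≤ x v := by
    intro n
    induction n with
    | zero => exact fun v => zero_le
    | succ n ih => exact fun v => (valueOp_mono ih v).trans (hx v)
  exact iSup_le fun n => h n v

variable [Finite V]

lemma value_le_step {v u : V} (hm : G.isMin v) (hu : G.E v u) :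
    G.value v ≤ step (G.wt v u) (G.value u) :=
  (congrFun valueOp_value v).symm.trans_le (valueOp_le_step hm hu G.value)

lemma step_le_value {v u : V} (hm : ¬ G.isMin v) (hu : G.E v u) :
    step (G.wt v u) (G.value u) ≤ G.value v :=
  (step_le_valueOp hm hu G.value).trans_eq (congrFun valueOp_value v)

end ValueIteration

section MinStrategy

variable {V : Type} [Finite V] (G : Game V (WithTop ℤ))

noncomputable def minChoice (v : V) : {u // G.E v u} :=
  (ENat.exists_eq_iInf fun u : {u // G.E v u} => step (G.wt v u) (G.value u)).choose

noncomputable def minStrat : G.MinStrat :=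
  ⟨fun v => G.minChoice v, fun v _ => (G.minChoice v).2⟩

variable {G}

lemma step_minChoice {v : V} (hm : G.isMin v) :
    step (G.wt v (G.minChoice v)) (G.value (G.minChoice v)) = G.value v := by
  conv_rhs => rw [← valueOp_value, valueOp, if_pos hm]
  exact (ENat.exists_eq_iInf fun u : {u // G.E v u} => step (G.wt v u) (G.value u)).choose_spec

lemma step_le_value_of_consMin {π : ℕ → V} (hp : G.IsPath π) (hc : G.ConsMin G.minStrat π)
    (i : ℕ) : step (G.wseq π i) (G.value (π (i + 1))) ≤ G.value (π i) := by
  by_cases hm : G.isMin (π i)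
  · rw [wseq, hc i hm]
    exact (step_minChoice hm).le
  · exact step_le_value hm (hp i)

theorem EnP_le_value_of_consMin {π : ℕ → V} (hp : G.IsPath π) (hc : G.ConsMin G.minStrat π) :
    EnP (G.wseq π) ≤ G.value (π 0) :=
  EnP_le_of_potential _ fun i hi =>
    (step_of_nonneg hi _).symm.trans_le (step_le_value_of_consMin hp hc i)

end MinStrategy

section Forcing

variable {V R : Type} (G : Game V R)

def MaxForces (P : V → V → Prop) (v : V) : Prop :=
  (G.isMin v → ∀ u, G.E v u → P v u) ∧ (¬ G.isMin v → ∃ u, G.E v u ∧ P v u)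

variable {G} {P Q : V → V → Prop} {v : V}

lemma MaxForces.mono (hPQ : ∀ u, P v u → Q v u) (h : G.MaxForces P v) : G.MaxForces Q v :=
  ⟨fun hm u hu => hPQ u (h.1 hm u hu), fun hm => (h.2 hm).imp fun u hu => ⟨hu.1, hPQ u hu.2⟩⟩

lemma not_maxForces_iff : ¬ G.MaxForces P v ↔
    (G.isMin v ∧ ∃ u, G.E v u ∧ ¬ P v u) ∨ (¬ G.isMin v ∧ ∀ u, G.E v u → ¬ P v u) := by
  by_cases hm : G.isMin v <;> simp [MaxForces, hm]

lemma MaxForces.exists_edge (h : G.MaxForces P v) : ∃ u, G.E v u ∧ P v u := by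
  by_cases hm : G.isMin v
  · obtain ⟨u, hu⟩ := G.nosink v
    exact ⟨u, hu, h.1 hm u hu⟩
  · exact h.2 hm

end Forcing

section Rank

variable {V : Type} (G : Game V (WithTop ℤ))

noncomputable def rank (v : V) : ℕ := sInf {n | G.valueIter n v = G.value v}

noncomputable def maxFiniteChoice [Finite V] (v : V) : {u // G.E v u} :=
  (exists_eq_ciSup_of_finite (f := fun u : {u // G.E v u} =>
    step (G.wt v u) (G.valueIter (G.rank v - 1) u))).choose

variable {G}

lemma valueIter_rank {v : V} (h : G.value v ≠ ⊤) : G.valueIter (G.rank v) v = G.value v :=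
  Nat.sInf_mem (ENat.exists_eq_iSup_of_lt_top (lt_top_iff_ne_top.2 h))

lemma rank_le {v : V} {n : ℕ} (h : G.valueIter n v = G.value v) : G.rank v ≤ n :=
  Nat.sInf_le h

lemma valueIter_le_valueOp_pred (n : ℕ) (v : V) :
    G.valueIter n v ≤ G.valueOp (G.valueIter (n - 1)) v := by
  cases n with
  | zero => exact zero_le
  | succ n => exact le_rfl

lemma valueIter_rank_le_step [Finite V] {v u : V} (hu : G.E v u)
    (hmax : ¬ G.isMin v → u = G.maxFiniteChoice v) :
    G.valueIter (G.rank v) v ≤ step (G.wt v u) (G.valueIter (G.rank v - 1) u) := by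
  refine (valueIter_le_valueOp_pred _ v).trans ?_
  by_cases hm : G.isMin v
  · exact valueOp_le_step hm hu _
  · rw [hmax hm, valueOp, if_neg hm]
    exact (exists_eq_ciSup_of_finite (f := fun u : {u // G.E v u} =>
      step (G.wt v u) (G.valueIter (G.rank v - 1) u))).choose_spec.ge

lemma rank_lt_of_step_le {v u : V} (hfin : G.value v ≠ ⊤) (h0 : G.value v ≠ 0)
    (hle : G.valueIter (G.rank v) v ≤ step (G.wt v u) (G.valueIter (G.rank v - 1) u))
    (hge : step (G.wt v u) (G.value u) ≤ G.value v) : G.rank u < G.rank v := by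
  have hpos : G.rank v ≠ 0 := fun h => h0 (by rw [← valueIter_rank hfin, h]; rfl)
  have hle' := (valueIter_rank hfin).symm.trans_le hle
  have heq : step (G.wt v u) (G.valueIter (G.rank v - 1) u) = step (G.wt v u) (G.value u) :=
    le_antisymm (step_mono _ (valueIter_le_value _ _)) (hge.trans hle')
  have hval : step (G.wt v u) (G.valueIter (G.rank v - 1) u) = G.value v :=
    le_antisymm (heq ▸ hge) hle'
  have := rank_le (eq_of_step_eq heq (hval ▸ h0) (hval ▸ hfin))
  omega

end Rank

section TopAttr

variable {V : Type} (G : Game V (WithTop ℤ))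

def GoodEdge (A : Set V) (v u : V) : Prop :=
  0 < G.wt v u ∧ (G.wt v u = ⊤ ∨ G.value u = ⊤) ∨ 0 ≤ G.wt v u ∧ u ∈ A

/-- From a vertex of infinite value, Max wins by taking positive edges infinitely often
without leaving the vertices of infinite value; `topAttr k` is where he can force such an edge
within `k` moves, losing no energy before. -/
def topAttr : ℕ → Set V
  | 0 => ∅
  | k + 1 => {v | G.value v = ⊤ ∧ G.MaxForces (G.GoodEdge (topAttr k)) v}

noncomputable def topRank (v : V) : ℕ := sInf {k | v ∈ G.topAttr (k + 1)}

variable {G}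

lemma GoodEdge.mono {A B : Set V} (hAB : A ⊆ B) {v u : V} (h : G.GoodEdge A v u) :
    G.GoodEdge B v u :=
  h.imp_right fun h => ⟨h.1, hAB h.2⟩

lemma topAttr_mono : Monotone G.topAttr := by
  refine monotone_nat_of_le_succ fun k => ?_
  induction k with
  | zero => exact Set.empty_subset _
  | succ k ih => exact fun v hv => ⟨hv.1, hv.2.mono fun u => GoodEdge.mono ih⟩

lemma value_eq_top_of_mem_topAttr {k : ℕ} {v : V} (hv : v ∈ G.topAttr k) : G.value v = ⊤ := by
  cases k with
  | zero => exact absurd hv (Set.notMem_empty v)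
  | succ k => exact hv.1

lemma step_eq_top_of_goodEdge {k : ℕ} {v u : V} (h : G.GoodEdge (G.topAttr k) v u) :
    step (G.wt v u) (G.value u) = ⊤ := by
  rw [step_eq_top_iff]
  rcases h with ⟨hpos, h⟩ | ⟨hnn, hu⟩
  · exact ⟨hpos.le, h⟩
  · exact ⟨hnn, .inr (value_eq_top_of_mem_topAttr hu)⟩

lemma step_le_of_not_goodEdge {A : Set V} {C : ℕ}
    (hC : ∀ v u, step (G.wt v u) (G.value u) ≠ ⊤ → step (G.wt v u) (G.value u) ≤ C)
    {v u : V} (h : ¬ G.GoodEdge A v u) :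
    step (G.wt v u) (if G.value u = ⊤ ∧ u ∉ A then C else G.value u) ≤ C := by
  simp only [GoodEdge, not_or, not_and] at h
  rcases lt_or_ge (G.wt v u) 0 with hneg | hnn
  · exact (step_of_neg hneg _).trans_le zero_le
  by_cases hu : G.value u = ⊤
  · have hzero : G.wt v u = 0 := le_antisymm (not_lt.1 fun hpos => (h.1 hpos).2 hu) hnn
    rw [if_pos ⟨hu, h.2 hnn⟩, hzero, step_zero]
  · have hw : G.wt v u ≠ ⊤ := fun hw => (h.1 (hw ▸ WithTop.coe_lt_top 0)).1 hw
    rw [if_neg fun h' => hu h'.1]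
    exact hC v u (by simp [step_eq_top_iff, hw, hu])

lemma mem_of_value_eq_top [Finite V] (A : Set V)
    (hA : ∀ v, G.value v = ⊤ → G.MaxForces (G.GoodEdge A) v → v ∈ A) {v : V}
    (hv : G.value v = ⊤) : v ∈ A := by
  obtain ⟨C, hC⟩ :=
    (Set.finite_range fun p : V × V => (step (G.wt p.1 p.2) (G.value p.2)).toNat).bddAbove
  replace hC : ∀ v u, step (G.wt v u) (G.value u) ≠ ⊤ → step (G.wt v u) (G.value u) ≤ C :=
    fun v u h => (ENat.natCast_toNat h).symm.trans_le (Nat.cast_le.2 (hC ⟨(v, u), rfl⟩))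
  set x : V → ℕ∞ := fun u => if G.value u = ⊤ ∧ u ∉ A then C else G.value u
  have hx : ∀ u, G.valueOp x u ≤ x u := by
    intro u
    by_cases hu : G.value u = ⊤ ∧ u ∉ A
    · have hnf : ¬ G.MaxForces (G.GoodEdge A) u := fun h => hu.2 (hA u hu.1 h)
      rw [not_maxForces_iff] at hnf
      rw [show x u = C from if_pos hu]
      rcases hnf with ⟨hm, w, hw, hng⟩ | ⟨hm, hng⟩
      · exact (valueOp_le_step hm hw x).trans (step_le_of_not_goodEdge hC hng)
      · rw [valueOp, if_neg hm]
        exact iSup_le fun w => step_le_of_not_goodEdge hC (hng w w.2)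
    · have hxv : x ≤ G.value := fun w => by
        by_cases hw : G.value w = ⊤ ∧ w ∉ A <;> simp [x, hw]
      rw [show x u = G.value u from if_neg hu]
      exact (valueOp_mono hxv u).trans_eq (congrFun valueOp_value u)
  by_contra hvA
  have := value_le_of_valueOp_le x hx v
  simp [x, hv, hvA] at this

lemma exists_mem_topAttr [Finite V] {v : V} (hv : G.value v = ⊤) : ∃ k, v ∈ G.topAttr (k + 1) := by
  obtain ⟨K, hK⟩ := WellFoundedGT.monotone_chain_condition ⟨G.topAttr, topAttr_mono⟩
  have hstable : G.topAttr (K + 1) = G.topAttr K := (hK (K + 1) K.le_succ).symm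
  have hvK : v ∈ G.topAttr K :=
    mem_of_value_eq_top _ (fun w hw hf => hstable ▸ ⟨hw, hf⟩) hv
  cases K with
  | zero => exact absurd hvK (Set.notMem_empty v)
  | succ k => exact ⟨k, hvK⟩

lemma mem_topAttr_topRank [Finite V] {v : V} (hv : G.value v = ⊤) :
    v ∈ G.topAttr (G.topRank v + 1) :=
  Nat.sInf_mem (exists_mem_topAttr hv)

lemma topRank_le {k : ℕ} {v : V} (hv : v ∈ G.topAttr (k + 1)) : G.topRank v ≤ k :=
  Nat.sInf_le hv

end TopAttr

section MaxStrategy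

variable {V : Type} [Finite V] (G : Game V (WithTop ℤ))

noncomputable def maxTopChoice {v : V} (hv : G.value v = ⊤) : {u // G.E v u} :=
  ⟨_, (mem_topAttr_topRank hv).2.exists_edge.choose_spec.1⟩

noncomputable def maxChoice (v : V) : {u // G.E v u} :=
  if hv : G.value v = ⊤ then G.maxTopChoice hv else G.maxFiniteChoice v

noncomputable def maxStrat : G.MaxStrat :=
  ⟨fun v => G.maxChoice v, fun v _ => (G.maxChoice v).2⟩

variable {G} {v u : V}

lemma goodEdge_maxTopChoice (hv : G.value v = ⊤) :
    G.GoodEdge (G.topAttr (G.topRank v)) v (G.maxTopChoice hv) :=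
  (mem_topAttr_topRank hv).2.exists_edge.choose_spec.2

lemma goodEdge_of_maxMove {k : ℕ} (hv : v ∈ G.topAttr (k + 1)) (hu : G.E v u)
    (hτ : ¬ G.isMin v → u = G.maxChoice v) : G.GoodEdge (G.topAttr k) v u := by
  by_cases hm : G.isMin v
  · exact hv.2.1 hm u hu
  · rw [hτ hm, maxChoice, dif_pos hv.1]
    exact (goodEdge_maxTopChoice hv.1).mono (topAttr_mono (topRank_le hv))

lemma value_le_step_of_maxMove (hu : G.E v u) (hτ : ¬ G.isMin v → u = G.maxChoice v) :
    G.value v ≤ step (G.wt v u) (G.value u) := by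
  by_cases hm : G.isMin v
  · exact value_le_step hm hu
  by_cases hv : G.value v = ⊤
  · rw [hτ hm, maxChoice, dif_pos hv, step_eq_top_of_goodEdge (goodEdge_maxTopChoice hv)]
    exact le_top
  · have hfin : ¬ G.isMin v → u = G.maxFiniteChoice v := fun hm => by
      rw [hτ hm, maxChoice, dif_neg hv]
    calc G.value v = G.valueIter (G.rank v) v := (valueIter_rank hv).symm
      _ ≤ step (G.wt v u) (G.valueIter (G.rank v - 1) u) := valueIter_rank_le_step hu hfin
      _ ≤ step (G.wt v u) (G.value u) := step_mono _ (valueIter_le_value _ _)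

lemma rank_lt_of_maxMove (hu : G.E v u) (hτ : ¬ G.isMin v → u = G.maxChoice v)
    (hfin : G.value v ≠ ⊤) (h0 : G.value v ≠ 0) (hge : step (G.wt v u) (G.value u) ≤ G.value v) :
    G.rank u < G.rank v :=
  rank_lt_of_step_le hfin h0
    (valueIter_rank_le_step hu fun hm => by rw [hτ hm, maxChoice, dif_neg hfin]) hge

variable {π : ℕ → V}

lemma exists_progress_of_consMax (k : ℕ) (hp : G.IsPath π) (hc : G.ConsMax G.maxStrat π)
    (hk : π 0 ∈ G.topAttr k) :
    ∃ t, (∀ i < t, 0 ≤ G.wseq π i) ∧ 0 < G.wseq π t ∧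
      (G.wseq π t = ⊤ ∨ G.value (π (t + 1)) = ⊤) := by
  induction k generalizing π with
  | zero => exact absurd hk (Set.notMem_empty _)
  | succ k ih =>
    rcases goodEdge_of_maxMove hk (hp 0) (hc 0) with ⟨hpos, hnext⟩ | ⟨hnn, hmem⟩
    · exact ⟨0, by simp, hpos, hnext⟩
    · obtain ⟨t, hbefore, hpos, hnext⟩ :=
        ih (π := fun i => π (i + 1)) (fun i => hp (i + 1)) (fun i => hc (i + 1)) hmem
      refine ⟨t + 1, fun i hi => ?_, hpos, hnext⟩
      rcases i with _ | i
      · exact hnn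
      · exact hbefore i (by omega)

theorem EnP_eq_top_of_consMax (hp : G.IsPath π) (hc : G.ConsMax G.maxStrat π)
    (hv : G.value (π 0) = ⊤) : EnP (G.wseq π) = ⊤ := by
  refine ENat.eq_top_iff_forall_ge.2 fun c => ?_
  induction c generalizing π with
  | zero => exact zero_le
  | succ c ih =>
    obtain ⟨k, hk⟩ := exists_mem_topAttr hv
    obtain ⟨t, hbefore, hpos, hnext⟩ := exists_progress_of_consMax _ hp hc hk
    have hnn : ∀ i < t + 1, 0 ≤ G.wseq π i := fun i hi =>
      (Nat.lt_succ_iff_lt_or_eq.1 hi).elim (hbefore i) fun h => h ▸ hpos.le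
    have hsum : ∑ i ∈ Finset.range (t + 1), wToN (G.wseq π i) =
        ∑ i ∈ Finset.range t, wToN (G.wseq π i) + wToN (G.wseq π t) :=
      Finset.sum_range_succ _ t
    rcases hnext with htop | htop
    · have := sum_le_EnP hnn
      rw [hsum, wToN_eq_top_iff.2 htop, add_top, top_le_iff] at this
      exact this ▸ le_top
    · calc ((c + 1 : ℕ) : ℕ∞) = 1 + c := by push_cast; exact add_comm _ _
        _ ≤ ∑ i ∈ Finset.range (t + 1), wToN (G.wseq π i) +
            EnP (fun j => G.wseq π (t + 1 + j)) := by
          gcongr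
          · rw [hsum]
            exact (one_le_wToN hpos).trans le_add_self
          · exact ih (π := fun j => π (t + 1 + j)) (fun j => hp _) (fun j => hc _) htop
        _ ≤ EnP (G.wseq π) := add_EnP_shift_le hnn

theorem value_le_EnP_of_consMax (hp : G.IsPath π) (hc : G.ConsMax G.maxStrat π) :
    G.value (π 0) ≤ EnP (G.wseq π) :=
  le_EnP_of_potential (fun i => G.value (π i)) (fun i => G.rank (π i))
    (fun i => value_le_step_of_maxMove (hp i) (hc i))
    (fun i hi => EnP_eq_top_of_consMax (π := fun j => π (i + j)) (fun j => hp _) (fun j => hc _) hi)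
    ((Set.finite_range G.value).subset (Set.range_comp_subset_range π G.value))
    (fun i hw heq h0 htop => rank_lt_of_maxMove (hp i) (hc i) htop h0 (by
      rw [show G.wt (π i) (π (i + 1)) = 0 from hw, step_zero, heq]))

end MaxStrategy

section Duality

variable {V R : Type} (G : Game V R)

lemma exists_play (σ : G.MinStrat) (τ : G.MaxStrat) (v : V) :
    ∃ π : ℕ → V, π 0 = v ∧ G.IsPath π ∧ G.ConsMin σ π ∧ G.ConsMax τ π := by
  set next : V → V := fun x => if G.isMin x then σ.1 x else τ.1 x
  have hnext : ∀ n, next^[n + 1] v = next (next^[n] v) := fun n =>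
    Function.iterate_succ_apply' next n v
  refine ⟨fun n => next^[n] v, rfl, fun i => ?_, fun i hm => ?_, fun i hm => ?_⟩ <;>
    simp only [hnext, next]
  · split_ifs with hm
    exacts [σ.2 _ hm, τ.2 _ hm]
  · rw [if_pos hm]
  · rw [if_neg hm]

lemma iSup_iInf_le_iInf_iSup_plays {α : Type*} [CompleteLattice α] (f : (ℕ → V) → α) (v : V) :
    ⨆ τ : G.MaxStrat, ⨅ π : G.PlaysMax τ v, f π.1 ≤ ⨅ σ : G.MinStrat, ⨆ π : G.PlaysMin σ v, f π.1 :=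
  iSup_le fun τ => le_iInf fun σ => by
    obtain ⟨π, h0, hp, hσ, hτ⟩ := G.exists_play σ τ v
    exact (iInf_le _ (⟨π, h0, hp, hτ⟩ : G.PlaysMax τ v)).trans
      (le_iSup (fun π : G.PlaysMin σ v => f π.1) ⟨π, h0, hp, hσ⟩)

end Duality

end Game

/-- Positional determinacy of positive-energy games. -/
theorem enp_positional_determinacy {V : Type} [Fintype V] (G : Game V (WithTop ℤ)) :
    ∃ (σ₀ : G.MinStrat) (τ₀ : G.MaxStrat), ∀ v : V,
      (⨆ π : G.PlaysMin σ₀ v, EnP (G.wseq π.1))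
          = (⨅ σ : G.MinStrat, ⨆ π : G.PlaysMin σ v, EnP (G.wseq π.1)) ∧
      (⨅ σ : G.MinStrat, ⨆ π : G.PlaysMin σ v, EnP (G.wseq π.1))
          = (⨆ τ : G.MaxStrat, ⨅ π : G.PlaysMax τ v, EnP (G.wseq π.1)) ∧
      (⨆ τ : G.MaxStrat, ⨅ π : G.PlaysMax τ v, EnP (G.wseq π.1))
          = (⨅ π : G.PlaysMax τ₀ v, EnP (G.wseq π.1)) := by
  refine ⟨G.minStrat, G.maxStrat, fun v => ?_⟩
  have hmin : ⨆ π : G.PlaysMin G.minStrat v, EnP (G.wseq π.1) ≤ G.value v :=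
    iSup_le fun ⟨π, h0, hp, hc⟩ => by subst h0; exact EnP_le_value_of_consMin hp hc
  have hmax : G.value v ≤ ⨅ π : G.PlaysMax G.maxStrat v, EnP (G.wseq π.1) :=
    le_iInf fun ⟨π, h0, hp, hc⟩ => by subst h0; exact value_le_EnP_of_consMax hp hc
  have hσ := iInf_le (fun σ => ⨆ π : G.PlaysMin σ v, EnP (G.wseq π.1)) G.minStrat
  have hτ := le_iSup (fun τ => ⨅ π : G.PlaysMax τ v, EnP (G.wseq π.1)) G.maxStrat
  have hdual := G.iSup_iInf_le_iInf_iSup_plays (fun π => EnP (G.wseq π)) v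
  exact ⟨le_antisymm (hmin.trans (hmax.trans (hτ.trans hdual))) hσ,
    le_antisymm (hσ.trans (hmin.trans (hmax.trans hτ))) hdual,
    le_antisymm (hdual.trans (hσ.trans (hmin.trans hmax))) hτ⟩
end

section
/- For every game G with integer weights and every vertex v, the following are equivalent: (i) MP_G(v) ≤ 0; (ii) En_G(v) < ∞; (iii) En_G(v) ≤ (n−1)·W, where n = |V| and W = max_{e ∈ E} |w(e)|. -/
attribute [local instance] Classical.propDecidable

open Game

/-!
Fix a positional strategy `σ` of Min. If some play consistent with `σ` closes a cycle of positive
weight, Max can repeat that cycle forever (the repeated play is still consistent with `σ`, since `σ`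
is positional), which makes both the energy and the mean payoff of `σ` positive, the energy even
infinite. Otherwise every cycle on a consistent play is non-positive, and cutting cycles out of a
prefix of length `k ≥ n` shortens it without decreasing its weight, so every prefix weighs at most
that of a simple path, `(n - 1) · W`. Bounded partial sums give mean payoff `≤ 0`. Hence all three
conditions on `σ` say that it closes no positive cycle, and since there are finitely many positional
strategies the infima in `MP_G(v)` and `En_G(v)` are attained.
-/

open Finset

lemma iInf_le_iff_of_finite {ι α : Type*} [CompleteLinearOrder α] [Finite ι] [Nonempty ι]
    {f : ι → α} {a : α} : ⨅ i, f i ≤ a ↔ ∃ i, f i ≤ a := by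
  obtain ⟨i, hi⟩ := exists_eq_ciInf_of_finite (f := f)
  exact ⟨fun h => ⟨i, hi ▸ h⟩, fun ⟨j, hj⟩ => (iInf_le f j).trans hj⟩

lemma exists_lt_le_card_eq {V : Type} [Fintype V] (p : ℕ → V) :
    ∃ i j, i < j ∧ j ≤ Fintype.card V ∧ p i = p j := by
  obtain ⟨a, ha, b, hb, hab, he⟩ := Finset.exists_ne_map_eq_of_card_lt_of_maps_to
    (s := range (Fintype.card V + 1)) (t := univ) (by simp) (fun m _ => mem_coe.2 (mem_univ (p m)))
  rw [mem_range] at ha hb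
  rcases hab.lt_or_gt with h | h
  · exact ⟨a, b, h, by omega, he⟩
  · exact ⟨b, a, h, by omega, he.symm⟩

namespace Game

section Plays

variable {V R : Type} {G : Game V R} {σ : G.MinStrat} {v : V}

instance [Finite V] (G : Game V R) : Finite G.MinStrat :=
  inferInstanceAs (Finite {σ : V → V // ∀ v, G.isMin v → G.E v (σ v)})

instance (G : Game V R) : Nonempty G.MinStrat :=
  ⟨⟨fun u => (G.nosink u).choose, fun u _ => (G.nosink u).choose_spec⟩⟩

lemma PlaysMin.exists_wseq_eq_comp (π : G.PlaysMin σ v) (f : ℕ → ℕ) (h0 : π.1 (f 0) = v)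
    (hf : ∀ m, π.1 (f (m + 1)) = π.1 (f m + 1)) :
    ∃ ρ : G.PlaysMin σ v, ∀ m, G.wseq ρ.1 m = G.wseq π.1 (f m) := by
  refine ⟨⟨π.1 ∘ f, h0, fun m => ?_, fun m hm => ?_⟩, fun m => ?_⟩
  · simpa only [Function.comp_apply, hf] using π.2.2.1 (f m)
  · simpa only [Function.comp_apply, hf] using π.2.2.2 (f m) hm
  · simp only [wseq, Function.comp_apply, hf]

variable [AddCommMonoid R]

lemma PlaysMin.exists_cut (π : G.PlaysMin σ v) {i d : ℕ} (hcyc : π.1 (i + d) = π.1 i) :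
    ∃ ρ : G.PlaysMin σ v, ∀ r, ∑ m ∈ range (i + d + r), G.wseq π.1 m =
      ∑ m ∈ range (i + r), G.wseq ρ.1 m + ∑ m ∈ range d, G.wseq π.1 (i + m) := by
  set f : ℕ → ℕ := fun m => if m < i then m else m + d with hf
  have h0 : π.1 (f 0) = v := by
    rcases Nat.eq_zero_or_pos i with rfl | hi
    · simpa [hf, π.2.1] using hcyc
    · simpa [hf, hi] using π.2.1
  have hstep : ∀ m, π.1 (f (m + 1)) = π.1 (f m + 1) := by
    intro m
    rcases lt_trichotomy (m + 1) i with h | h | h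
    · simp [hf, h, show m < i by omega]
    · subst h
      simpa [hf] using hcyc
    · simp [hf, show ¬ m + 1 < i by omega, show ¬ m < i by omega, add_right_comm]
  obtain ⟨ρ, hρ⟩ := π.exists_wseq_eq_comp f h0 hstep
  refine ⟨ρ, fun r => ?_⟩
  have hlow : ∑ m ∈ range i, G.wseq π.1 (f m) = ∑ m ∈ range i, G.wseq π.1 m :=
    sum_congr rfl fun m hm => by simp [hf, mem_range.1 hm]
  have hhigh : ∀ x, f (i + x) = i + d + x := fun x => by
    simp only [hf, if_neg (show ¬ i + x < i by omega)]
    omega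
  simp only [sum_range_add, hρ, hlow, hhigh]
  abel

lemma PlaysMin.exists_pump (π : G.PlaysMin σ v) {i d : ℕ} (hd : 0 < d)
    (hcyc : π.1 (i + d) = π.1 i) :
    ∃ ρ : G.PlaysMin σ v, ∀ t : ℕ, ∑ m ∈ range (i + t * d), G.wseq ρ.1 m =
      ∑ m ∈ range i, G.wseq π.1 m + t • ∑ m ∈ range d, G.wseq π.1 (i + m) := by
  set f : ℕ → ℕ := fun m => if m < i then m else i + (m - i) % d with hf
  have h0 : π.1 (f 0) = v := by
    rcases Nat.eq_zero_or_pos i with rfl | hi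
    · simpa [hf] using π.2.1
    · simpa [hf, hi] using π.2.1
  have hstep : ∀ m, π.1 (f (m + 1)) = π.1 (f m + 1) := by
    intro m
    rcases lt_trichotomy (m + 1) i with h | rfl | h
    · simp [hf, h, show m < i by omega]
    · simp [hf]
    simp only [hf, if_neg (show ¬ m + 1 < i by omega), if_neg (show ¬ m < i by omega)]
    rw [show m + 1 - i = m - i + 1 by omega, ← Nat.mod_add_mod, add_assoc]
    rcases Nat.lt_or_eq_of_le (Nat.mod_lt (m - i) hd) with hlt | heq
    · rw [Nat.mod_eq_of_lt hlt]
    · rw [← Nat.succ_eq_add_one, heq, Nat.mod_self, add_zero, hcyc]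
  have hperiod : ∀ t x, x < d → f (i + t * d + x) = i + x := by
    intro t x hx
    simp only [hf, if_neg (show ¬ i + t * d + x < i by omega),
      show i + t * d + x - i = x + t * d by omega, Nat.add_mul_mod_self_right, Nat.mod_eq_of_lt hx]
  obtain ⟨ρ, hρ⟩ := π.exists_wseq_eq_comp f h0 hstep
  refine ⟨ρ, fun t => ?_⟩
  induction t with
  | zero =>
    simp only [zero_mul, add_zero, zero_smul]
    exact sum_congr rfl fun m hm => by simp only [hρ, hf, if_pos (mem_range.1 hm)]
  | succ t ih =>
    rw [add_mul, one_mul, ← add_assoc, sum_range_add, ih, succ_nsmul, add_assoc]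
    congr 2
    exact sum_congr rfl fun x hx => by rw [hρ, hperiod t x (mem_range.1 hx)]

end Plays

section Energy

lemma En_toE_intCast (w : ℕ → ℤ) :
    En (fun i => toE (w i)) = ⨆ k, (((∑ i ∈ range k, w i : ℤ) : ℝ) : EReal) := by
  refine iSup_congr fun k => ?_
  calc ∑ i ∈ range k, toE (w i) = ∑ i ∈ range k, ((w i : ℝ) : EReal) :=
        sum_congr rfl fun i _ => by simp [toE]
    _ = _ := by
        rw [Int.cast_sum]
        exact (map_sum (⟨⟨Real.toEReal, EReal.coe_zero⟩, EReal.coe_add⟩ : ℝ →+ EReal) _ _).symm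

lemma MPv_nonpos_of_sum_le (w : ℕ → ℤ) (r : ℝ) (h : ∀ k, ((∑ i ∈ range k, w i : ℤ) : ℝ) ≤ r) :
    MPv w ≤ 0 := by
  have hlim : Filter.limsup (fun k : ℕ => ((max r 0 / k : ℝ) : EReal)) Filter.atTop = 0 := by
    apply Filter.Tendsto.limsup_eq
    simpa using EReal.tendsto_coe.2 (tendsto_const_div_atTop_nhds_zero_nat (max r 0))
  refine (Filter.limsup_le_limsup (Filter.Eventually.of_forall fun k => ?_)).trans hlim.le
  exact EReal.coe_le_coe_iff.2 (div_le_div_of_nonneg_right ((h k).trans (le_max_left r 0))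
    k.cast_nonneg)

variable {w : ℕ → ℤ} {i d : ℕ} {A C : ℤ}

lemma iSup_sum_eq_top_of_pump (hC : 0 < C)
    (h : ∀ t : ℕ, ∑ m ∈ range (i + t * d), w m = A + t * C) :
    ⨆ k, (((∑ m ∈ range k, w m : ℤ) : ℝ) : EReal) = ⊤ := by
  refine iSup_eq_top.2 fun b hb => ?_
  obtain ⟨r, hbr, -⟩ := EReal.lt_iff_exists_real_btwn.1 hb
  obtain ⟨t, ht⟩ := exists_nat_gt (r - A)
  refine ⟨i + t * d, hbr.trans ?_⟩
  have hC' : (1 : ℝ) ≤ C := by exact_mod_cast hC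
  rw [h t, EReal.coe_lt_coe_iff]
  push_cast
  nlinarith

lemma MPv_pos_of_pump (hd : 0 < d) (hC : 0 < C)
    (h : ∀ t : ℕ, ∑ m ∈ range (i + t * d), w m = A + t * C) : 0 < MPv w := by
  by_contra! hle
  -- along `k = i + t * d` the averages tend to `C / d ≥ 1 / d`, so they cannot stay below `1 / 2d`
  have hε : (0 : ℝ) < 1 / (2 * d) := by positivity
  have hev := Filter.eventually_lt_of_limsup_lt (hle.trans_lt (EReal.coe_lt_coe_iff.2 hε))
  have htend : Filter.Tendsto (fun t : ℕ => i + t * d) Filter.atTop Filter.atTop :=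
    Filter.tendsto_atTop_mono (fun t => show t ≤ i + t * d by nlinarith) Filter.tendsto_id
  obtain ⟨t, hlt, ht⟩ :=
    ((htend.eventually hev).and (Filter.eventually_ge_atTop (i + 2 * A.natAbs + 1))).exists
  rw [h t, EReal.coe_lt_coe_iff] at hlt
  have hpos : (0 : ℝ) < (i + t * d : ℕ) := by
    have := Nat.mul_pos (show 0 < t by omega) hd
    exact_mod_cast (show 0 < i + t * d by omega)
  rw [div_lt_div_iff₀ hpos (by positivity)] at hlt
  push_cast at hlt
  have hC' : (t * d : ℝ) ≤ t * d * C :=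
    le_mul_of_one_le_right (by positivity) (by exact_mod_cast hC)
  have hA : -(d * A.natAbs : ℝ) ≤ d * A := by
    rw [neg_le, ← mul_neg, Nat.cast_natAbs]
    exact mul_le_mul_of_nonneg_left (by exact_mod_cast neg_le_abs A) (by positivity)
  have ht' : (d * (i + 2 * A.natAbs + 1) : ℝ) ≤ d * t :=
    mul_le_mul_of_nonneg_left (by exact_mod_cast ht) (by positivity)
  have hi : (i : ℝ) ≤ d * i := le_mul_of_one_le_left (by positivity) (by exact_mod_cast hd)
  linarith

end Energy

section Strategy

variable {V : Type} {G : Game V ℤ} {σ : G.MinStrat} {v : V}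

lemma wt_le_maxW [Fintype V] (G : Game V ℤ) {a b : V} (h : G.E a b) : G.wt a b ≤ maxW G := by
  have hle := le_sup (f := fun p : V × V => if G.E p.1 p.2 then (G.wt p.1 p.2).natAbs else 0)
    (mem_univ (a, b))
  simp only [if_pos h] at hle
  exact Int.le_natAbs.trans (by exact_mod_cast hle)

def NoPosCycle (G : Game V ℤ) (σ : G.MinStrat) (v : V) : Prop :=
  ∀ π : G.PlaysMin σ v, ∀ i d, π.1 (i + d) = π.1 i → ∑ m ∈ range d, G.wseq π.1 (i + m) ≤ 0

lemma NoPosCycle.sum_wseq_le [Fintype V] (h : NoPosCycle G σ v) (k : ℕ) (π : G.PlaysMin σ v) :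
    ∑ m ∈ range k, G.wseq π.1 m ≤ ((Fintype.card V - 1) * maxW G : ℕ) := by
  induction k using Nat.strong_induction_on generalizing π with
  | _ k ih =>
  by_cases hk : k < Fintype.card V
  · calc ∑ m ∈ range k, G.wseq π.1 m ≤ ∑ m ∈ range k, (maxW G : ℤ) :=
          sum_le_sum fun m _ => wt_le_maxW G (π.2.2.1 m)
      _ = (k * maxW G : ℕ) := by simp
      _ ≤ _ := by gcongr; omega
  · obtain ⟨i, j, hij, hj, hp⟩ := exists_lt_le_card_eq π.1
    have hcyc : π.1 (i + (j - i)) = π.1 i := by rw [Nat.add_sub_cancel' hij.le, hp]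
    obtain ⟨ρ, hρ⟩ := π.exists_cut hcyc
    have hsplit := hρ (k - j)
    rw [show i + (j - i) + (k - j) = k by omega] at hsplit
    have hρk := ih (i + (k - j)) (by omega) ρ
    linarith [h π i (j - i) hcyc]

lemma exists_pump_of_not_noPosCycle (h : ¬ NoPosCycle G σ v) :
    ∃ ρ : G.PlaysMin σ v, ∃ i d A C, 0 < d ∧ 0 < C ∧
      ∀ t : ℕ, ∑ m ∈ range (i + t * d), G.wseq ρ.1 m = A + t * C := by
  simp only [NoPosCycle, not_forall, not_le] at h
  obtain ⟨π, i, d, hcyc, hC⟩ := h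
  have hd : 0 < d := Nat.pos_of_ne_zero fun hd => by simp [hd] at hC
  obtain ⟨ρ, hρ⟩ := π.exists_pump hd hcyc
  exact ⟨ρ, i, d, _, _, hd, hC, fun t => by rw [hρ, nsmul_eq_mul]⟩

noncomputable def stratMPVal (G : Game V ℤ) (σ : G.MinStrat) (v : V) : EReal :=
  ⨆ π : G.PlaysMin σ v, MPv (G.wseq π.1)

noncomputable def stratEnVal (G : Game V ℤ) (σ : G.MinStrat) (v : V) : EReal :=
  ⨆ π : G.PlaysMin σ v, En (fun i => toE ((liftZ G).wseq π.1 i))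

lemma stratEnVal_eq_iSup_sum : stratEnVal G σ v =
    ⨆ π : G.PlaysMin σ v, ⨆ k, (((∑ m ∈ range k, G.wseq π.1 m : ℤ) : ℝ) : EReal) :=
  iSup_congr fun π => En_toE_intCast (G.wseq π.1)

lemma stratEnVal_le_of_noPosCycle [Fintype V] (h : NoPosCycle G σ v) :
    stratEnVal G σ v ≤ ((((Fintype.card V - 1) * maxW G : ℕ) : ℝ) : EReal) := by
  rw [stratEnVal_eq_iSup_sum]
  exact iSup₂_le fun π k => EReal.coe_le_coe_iff.2 (by exact_mod_cast h.sum_wseq_le k π)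

lemma stratEnVal_eq_top_of_not_noPosCycle (h : ¬ NoPosCycle G σ v) : stratEnVal G σ v = ⊤ := by
  obtain ⟨ρ, i, d, A, C, -, hC, hpump⟩ := exists_pump_of_not_noPosCycle h
  rw [stratEnVal_eq_iSup_sum]
  exact top_unique ((iSup_sum_eq_top_of_pump hC hpump).symm.trans_le (le_iSup_of_le ρ le_rfl))

lemma noPosCycle_of_stratMPVal_nonpos (h : stratMPVal G σ v ≤ 0) : NoPosCycle G σ v := by
  by_contra hneg
  obtain ⟨ρ, i, d, A, C, hd, hC, hpump⟩ := exists_pump_of_not_noPosCycle hneg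
  exact (MPv_pos_of_pump hd hC hpump).not_ge ((le_iSup_of_le ρ le_rfl).trans h)

lemma stratMPVal_nonpos_of_stratEnVal_lt_top (h : stratEnVal G σ v < ⊤) :
    stratMPVal G σ v ≤ 0 := by
  rw [stratEnVal_eq_iSup_sum] at h
  refine iSup_le fun π => ?_
  obtain ⟨r, hr, -⟩ := EReal.lt_iff_exists_real_btwn.1 ((le_iSup_of_le π le_rfl).trans_lt h)
  exact MPv_nonpos_of_sum_le _ r fun k =>
    EReal.coe_le_coe_iff.1 ((le_iSup_of_le k le_rfl).trans hr.le)

lemma stratEnVal_lt_top_iff [Fintype V] : stratEnVal G σ v < ⊤ ↔ NoPosCycle G σ v :=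
  ⟨fun h => by_contra fun hneg => h.ne (stratEnVal_eq_top_of_not_noPosCycle hneg),
    fun h => (stratEnVal_le_of_noPosCycle h).trans_lt (EReal.coe_lt_top _)⟩

lemma stratEnVal_le_iff [Fintype V] :
    stratEnVal G σ v ≤ ((((Fintype.card V - 1) * maxW G : ℕ) : ℝ) : EReal) ↔ NoPosCycle G σ v :=
  ⟨fun h => stratEnVal_lt_top_iff.1 (h.trans_lt (EReal.coe_lt_top _)),
    stratEnVal_le_of_noPosCycle⟩

lemma stratMPVal_nonpos_iff [Fintype V] : stratMPVal G σ v ≤ 0 ↔ NoPosCycle G σ v :=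
  ⟨noPosCycle_of_stratMPVal_nonpos,
    fun h => stratMPVal_nonpos_of_stratEnVal_lt_top (stratEnVal_lt_top_iff.2 h)⟩

end Strategy

end Game

/-- Equivalence: `MP_G(v) ≤ 0 ↔ En_G(v) < ∞ ↔ En_G(v) ≤ (n−1)·W`. -/
theorem mp_en_equivalence {V : Type} [Fintype V] (G : Game V ℤ) (v : V) :
    (MPVal G v ≤ 0 ↔ EnVal (liftZ G) v < ⊤) ∧
    (EnVal (liftZ G) v < ⊤ ↔
      EnVal (liftZ G) v ≤ ((((Fintype.card V - 1) * maxW G : ℕ) : ℝ) : EReal)) := by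
  have hMP : MPVal G v = ⨅ σ, stratMPVal G σ v := rfl
  have hEn : EnVal (liftZ G) v = ⨅ σ, stratEnVal G σ v := rfl
  rw [hMP, hEn, iInf_lt_iff, iInf_le_iff_of_finite, iInf_le_iff_of_finite]
  simp only [stratMPVal_nonpos_iff, stratEnVal_lt_top_iff, stratEnVal_le_iff, and_self]
end

section
/- Potential reduction theorem: let G be a game with weights in ℤ ∪ {∞} and let φ : V → ℕ ∪ {∞} be a potential satisfying φ(v) ≤ En_G(v) for all v ∈ V. Then for every vertex v ∈ V, En_G(v) = φ(v) + En_{G_φ}(v) (with the convention ∞ + x = ∞). -/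
attribute [local instance] Classical.propDecidable

open Game

/-!
Along a prefix `π 0 → ⋯ → π k` of a play, the modified weights telescope:
`φ(π 0) + ∑ w_φ = ∑ w + φ(π k)` as long as all terms are finite, and an infinite modified weight
comes from an infinite weight or an infinite potential on the prefix. For every path this gives
`En(π) ≤ φ(π 0) + En_φ(π)`, hence `En_G ≤ φ + En_{G_φ}` strategy by strategy.

Conversely, fix a Min strategy `σ`. After a prefix of a `σ`-play ending in `π k`, Max can go on
playing against `σ` and, because `φ(π k) ≤ En_G(π k)`, collect a further `φ(π k)`. So
`∑ w + φ(π k)` is bounded by the value of `σ` from `v`, and by telescoping so is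
`φ(v) + ∑ w_φ`; taking suprema over prefixes and plays gives `φ + En_{G_φ} ≤ En_G`.
-/

namespace EReal

lemma add_iSup_le {ι : Sort*} {a c : EReal} {f : ι → EReal} (h : ∀ i, a + f i ≤ c) :
    a + ⨆ i, f i ≤ c :=
  add_le_of_forall_lt fun _ ha _ hb =>
    let ⟨i, hi⟩ := lt_iSup_iff.1 hb
    (add_le_add ha.le hi.le).trans (h i)

lemma le_add_iInf {ι : Sort*} {a c : EReal} {f : ι → EReal} (h₁ : a ≠ ⊥ ∨ ⨅ i, f i ≠ ⊤)
    (h₂ : a ≠ ⊤ ∨ ⨅ i, f i ≠ ⊥) (h : ∀ i, c ≤ a + f i) : c ≤ a + ⨅ i, f i :=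
  le_add_of_forall_gt h₁ h₂ fun _ ha _ hb =>
    let ⟨i, hi⟩ := iInf_lt_iff.1 hb
    (h i).trans (add_le_add ha.le hi.le)

lemma sum_ne_bot {ι : Type*} {s : Finset ι} {f : ι → EReal} (h : ∀ i ∈ s, f i ≠ ⊥) :
    ∑ i ∈ s, f i ≠ ⊥ :=
  Finset.sum_induction f (· ≠ ⊥) (fun _ _ ha hb => add_ne_bot_iff.2 ⟨ha, hb⟩) (by simp) h

end EReal

namespace Game

open Finset

variable {V : Type}

lemma toE_ne_bot (x : WithTop ℤ) : toE x ≠ ⊥ := by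
  unfold toE; split <;> simp

@[simp] lemma toE_top : toE ⊤ = ⊤ := by simp [toE]

lemma enatToE_nonneg (x : ENat) : 0 ≤ enatToE x := by
  unfold enatToE; split <;> simp

lemma enatToE_ne_bot (x : ENat) : enatToE x ≠ ⊥ :=
  ne_bot_of_le_ne_bot EReal.zero_ne_bot (enatToE_nonneg x)

@[simp] lemma enatToE_top : enatToE ⊤ = ⊤ := by simp [enatToE]

lemma sum_range_le_En (w : ℕ → EReal) (k : ℕ) : ∑ i ∈ range k, w i ≤ En w :=
  le_iSup (fun k => ∑ i ∈ range k, w i) k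

lemma En_nonneg (w : ℕ → EReal) : 0 ≤ En w := by
  simpa using sum_range_le_En w 0

lemma En_eq_top_of_eq_top {w : ℕ → EReal} (hw : ∀ i, w i ≠ ⊥) {i : ℕ} (hi : w i = ⊤) :
    En w = ⊤ :=
  top_le_iff.1 <| calc
    ⊤ = ∑ j ∈ range (i + 1), w j := by
      rw [sum_range_succ, hi, EReal.add_top_of_ne_bot (EReal.sum_ne_bot fun j _ => hw j)]
    _ ≤ En w := sum_range_le_En w (i + 1)

def splice (π ρ : ℕ → V) (k : ℕ) : ℕ → V :=
  fun n => if n < k then π n else ρ (n - k)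

lemma splice_of_le {π ρ : ℕ → V} {k n : ℕ} (h : ρ 0 = π k) (hn : n ≤ k) :
    splice π ρ k n = π n := by
  rcases hn.lt_or_eq with hn | rfl
  · simp [splice, hn]
  · simp [splice, h]

@[simp] lemma splice_add (π ρ : ℕ → V) (k n : ℕ) : splice π ρ k (k + n) = ρ n := by
  simp [splice]

lemma forall_splice {R : V → V → Prop} {π ρ : ℕ → V} {k : ℕ} (h : ρ 0 = π k)
    (hπ : ∀ i, R (π i) (π (i + 1))) (hρ : ∀ i, R (ρ i) (ρ (i + 1))) (i : ℕ) :
    R (splice π ρ k i) (splice π ρ k (i + 1)) := by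
  rcases lt_or_ge i k with hi | hi
  · rw [splice_of_le h hi.le, splice_of_le h hi]
    exact hπ i
  · obtain ⟨j, rfl⟩ := Nat.exists_eq_add_of_le hi
    rw [splice_add, add_assoc, splice_add]
    exact hρ j

lemma sum_range_splice {R : Type} {M : Type*} [AddCommMonoid M] (G : Game V R) (f : R → M)
    {π ρ : ℕ → V} {k : ℕ} (h : ρ 0 = π k) (m : ℕ) :
    ∑ i ∈ range (k + m), f (G.wseq (splice π ρ k) i)
      = ∑ i ∈ range k, f (G.wseq π i) + ∑ i ∈ range m, f (G.wseq ρ i) := by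
  rw [sum_range_add]
  congr 1
  · refine sum_congr rfl fun i hi => ?_
    rw [mem_range] at hi
    simp only [wseq, splice_of_le h hi.le, splice_of_le h hi]
  · simp only [wseq, add_assoc, splice_add]

section Plays

variable {R : Type} {G : Game V R} {σ : G.MinStrat} {v : V}

def PlaysMin.splice (π : G.PlaysMin σ v) (k : ℕ) (ρ : G.PlaysMin σ (π.1 k)) : G.PlaysMin σ v :=
  ⟨Game.splice π.1 ρ.1 k, by rw [splice_of_le ρ.2.1 k.zero_le, π.2.1],
    forall_splice ρ.2.1 π.2.2.1 ρ.2.2.1,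
    forall_splice (R := fun u u' => G.isMin u → u' = σ.1 u) ρ.2.1 π.2.2.2 ρ.2.2.2⟩

instance : Nonempty (G.PlaysMin σ v) := by
  let next : V → V := fun u => if G.isMin u then σ.1 u else Classical.choose (G.nosink u)
  refine ⟨⟨fun n => next^[n] v, rfl, fun n => ?_, fun n hn => ?_⟩⟩
  · dsimp only
    rw [Function.iterate_succ_apply']
    by_cases h : G.isMin (next^[n] v)
    · simpa [next, h] using σ.2 _ h
    · simpa [next, h] using Classical.choose_spec (G.nosink (next^[n] v))
  · simp [Function.iterate_succ_apply', next, hn]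

end Plays

noncomputable def stratEn (G : Game V (WithTop ℤ)) (σ : G.MinStrat) (v : V) : EReal :=
  ⨆ π : G.PlaysMin σ v, En (fun i => toE (G.wseq π.1 i))

section StrategyValue

variable {G : Game V (WithTop ℤ)} {σ : G.MinStrat} {v : V}

lemma En_le_stratEn (π : G.PlaysMin σ v) : En (fun i => toE (G.wseq π.1 i)) ≤ G.stratEn σ v :=
  le_iSup (fun π : G.PlaysMin σ v => En (fun i => toE (G.wseq π.1 i))) π

lemma stratEn_nonneg : 0 ≤ G.stratEn σ v :=
  let ⟨π⟩ : Nonempty (G.PlaysMin σ v) := inferInstance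
  (En_nonneg _).trans (En_le_stratEn π)

lemma EnVal_nonneg : 0 ≤ EnVal G v :=
  le_iInf fun _ => stratEn_nonneg

lemma sum_add_stratEn_le (π : G.PlaysMin σ v) (k : ℕ) :
    ∑ i ∈ range k, toE (G.wseq π.1 i) + G.stratEn σ (π.1 k) ≤ G.stratEn σ v :=
  EReal.add_iSup_le fun ρ => EReal.add_iSup_le fun m =>
    calc ∑ i ∈ range k, toE (G.wseq π.1 i) + ∑ i ∈ range m, toE (G.wseq ρ.1 i)
        = ∑ i ∈ range (k + m), toE (G.wseq (π.splice k ρ).1 i) :=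
          (sum_range_splice G toE ρ.2.1 m).symm
      _ ≤ G.stratEn σ v := (sum_range_le_En _ _).trans (En_le_stratEn _)

lemma sum_add_potential_le_stratEn {φ : V → ENat} (hφ : ∀ u, enatToE (φ u) ≤ EnVal G u)
    (π : G.PlaysMin σ v) (k : ℕ) :
    ∑ i ∈ range k, toE (G.wseq π.1 i) + enatToE (φ (π.1 k)) ≤ G.stratEn σ v :=
  (add_le_add le_rfl ((hφ _).trans (iInf_le _ σ))).trans (sum_add_stratEn_le π k)

end StrategyValue

section Modify

variable {G : Game V (WithTop ℤ)} {φ : V → ENat}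

lemma modWt_eq_top_iff {w : V → V → WithTop ℤ} {u v : V} :
    modWt w φ u v = ⊤ ↔ w u v = ⊤ ∨ φ u = ⊤ ∨ φ v = ⊤ := by
  unfold modWt
  split_ifs with h <;> simp [h]

lemma enatToE_add_toE_modWt {w : V → V → WithTop ℤ} {u v : V} (h : modWt w φ u v ≠ ⊤) :
    enatToE (φ u) + toE (modWt w φ u v) = toE (w u v) + enatToE (φ v) := by
  obtain ⟨hw, hu, hv⟩ : w u v ≠ ⊤ ∧ φ u ≠ ⊤ ∧ φ v ≠ ⊤ := by
    simpa only [ne_eq, modWt_eq_top_iff, not_or] using h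
  obtain ⟨n, hn⟩ := WithTop.ne_top_iff_exists.1 hw
  obtain ⟨a, ha⟩ := ENat.ne_top_iff_exists.1 hu
  obtain ⟨b, hb⟩ := ENat.ne_top_iff_exists.1 hv
  simp only [modWt, toE, enatToE, ← hn, ← ha, ← hb, WithTop.coe_ne_top, ENat.natCast_ne_top,
    or_self, if_false, dite_false, WithTop.untop_coe, WithTop.untopD_coe, ENat.toNat_natCast]
  norm_cast
  ring

lemma wseq_modify (π : ℕ → V) (i : ℕ) :
    (modify G φ).wseq π i = modWt G.wt φ (π i) (π (i + 1)) := rfl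

lemma enatToE_add_sum_modify {π : ℕ → V} {k : ℕ} (h : ∀ i < k, (modify G φ).wseq π i ≠ ⊤) :
    enatToE (φ (π 0)) + ∑ i ∈ range k, toE ((modify G φ).wseq π i)
      = ∑ i ∈ range k, toE (G.wseq π i) + enatToE (φ (π k)) := by
  induction k with
  | zero => simp
  | succ k ih =>
    rw [sum_range_succ, sum_range_succ, ← add_assoc, ih fun i hi => h i (by omega), add_assoc,
      wseq_modify, enatToE_add_toE_modWt (h k k.lt_succ_self), ← add_assoc]
    rfl

lemma En_le_add_En_modify (π : ℕ → V) :
    En (fun i => toE (G.wseq π i))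
      ≤ enatToE (φ (π 0)) + En (fun i => toE ((modify G φ).wseq π i)) := by
  refine iSup_le fun k => ?_
  by_cases h : ∀ i < k, (modify G φ).wseq π i ≠ ⊤
  · calc ∑ i ∈ range k, toE (G.wseq π i)
        ≤ ∑ i ∈ range k, toE (G.wseq π i) + enatToE (φ (π k)) :=
          le_add_of_nonneg_right (enatToE_nonneg _)
      _ = enatToE (φ (π 0)) + ∑ i ∈ range k, toE ((modify G φ).wseq π i) :=
          (enatToE_add_sum_modify h).symm
      _ ≤ _ := add_le_add le_rfl (sum_range_le_En _ k)
  · push Not at h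
    obtain ⟨i, -, hi⟩ := h
    rw [En_eq_top_of_eq_top (fun _ => toE_ne_bot _) (i := i) (by simp [hi]),
      EReal.add_top_of_ne_bot (enatToE_ne_bot _)]
    exact le_top

lemma stratEn_le_add_stratEn_modify (σ : G.MinStrat) (v : V) :
    G.stratEn σ v ≤ enatToE (φ v) + (modify G φ).stratEn σ v :=
  iSup_le fun π => (En_le_add_En_modify π.1).trans <| by
    rw [π.2.1]
    exact add_le_add le_rfl (En_le_stratEn (G := modify G φ) π)

lemma EnVal_le_add_EnVal_modify (v : V) : EnVal G v ≤ enatToE (φ v) + EnVal (modify G φ) v :=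
  EReal.le_add_iInf (.inl (enatToE_ne_bot _)) (.inr (ne_bot_of_le_ne_bot EReal.zero_ne_bot
    EnVal_nonneg)) fun σ => (iInf_le _ σ).trans (stratEn_le_add_stratEn_modify (G := G) σ v)

lemma stratEn_eq_top_of_modWt_eq_top (hφ : ∀ u, enatToE (φ u) ≤ EnVal G u) {σ : G.MinStrat}
    {v : V} (π : G.PlaysMin σ v) {i : ℕ}
    (hi : modWt G.wt φ (π.1 i) (π.1 (i + 1)) = ⊤) : G.stratEn σ v = ⊤ := by
  have hsum (k : ℕ) : ∑ j ∈ range k, toE (G.wseq π.1 j) ≠ ⊥ :=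
    EReal.sum_ne_bot fun _ _ => toE_ne_bot _
  refine top_le_iff.1 ?_
  rcases modWt_eq_top_iff.1 hi with hw | hu | hv
  · calc ⊤ = En (fun j => toE (G.wseq π.1 j)) :=
          (En_eq_top_of_eq_top (fun _ => toE_ne_bot _) (i := i) (by simp [wseq, hw])).symm
      _ ≤ G.stratEn σ v := En_le_stratEn π
  · simpa [hu, EReal.add_top_of_ne_bot (hsum i)] using sum_add_potential_le_stratEn hφ π i
  · simpa [hv, EReal.add_top_of_ne_bot (hsum (i + 1))] using
      sum_add_potential_le_stratEn hφ π (i + 1)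

lemma add_sum_modify_le_stratEn (hφ : ∀ u, enatToE (φ u) ≤ EnVal G u) {σ : G.MinStrat} {v : V}
    (π : G.PlaysMin σ v) (k : ℕ) :
    enatToE (φ v) + ∑ i ∈ range k, toE ((modify G φ).wseq π.1 i) ≤ G.stratEn σ v := by
  by_cases h : ∀ i < k, (modify G φ).wseq π.1 i ≠ ⊤
  · have := sum_add_potential_le_stratEn hφ π k
    rwa [← enatToE_add_sum_modify h, π.2.1] at this
  · push Not at h
    obtain ⟨i, -, hi⟩ := h
    rw [stratEn_eq_top_of_modWt_eq_top hφ π hi]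
    exact le_top

lemma add_EnVal_modify_le_EnVal (hφ : ∀ u, enatToE (φ u) ≤ EnVal G u) (v : V) :
    enatToE (φ v) + EnVal (modify G φ) v ≤ EnVal G v :=
  le_iInf fun σ => (add_le_add le_rfl (iInf_le _ σ)).trans <|
    EReal.add_iSup_le fun π => EReal.add_iSup_le fun k => add_sum_modify_le_stratEn hφ π k

end Modify

end Game

theorem potential_reduction_general {V : Type} (G : Game V (WithTop ℤ))
    (φ : V → ENat) (hφ : ∀ v, enatToE (φ v) ≤ EnVal G v) :
    ∀ v, EnVal G v = enatToE (φ v) + EnVal (modify G φ) v :=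
  fun v => le_antisymm (EnVal_le_add_EnVal_modify v) (add_EnVal_modify_le_EnVal hφ v)

/-- Potential reduction theorem: if `φ ≤ En_G` then `En_G = φ + En_{G_φ}`. -/
theorem potential_reduction {V : Type} [Fintype V] (G : Game V (WithTop ℤ))
    (φ : V → ENat) (hφ : ∀ v, enatToE (φ v) ≤ EnVal G v) :
    ∀ v, EnVal G v = enatToE (φ v) + EnVal (modify G φ) v :=
  potential_reduction_general G φ hφ
end
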